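/- Let ⟨r⁻, r⁺⟩ be a combinatorial characteristic ray pair of period n ≥ 2 with itinerary (u_1 … u_n)^∞. Then there is at most one intermediate external address s of length n with itin_{r⁻}(s) = u_1 … u_{n-1} *; moreover, every intermediate external address s of length n satisfying itin_{r⁻}(s) = itin_{r⁺}(s) = K(s) = u_1 … u_{n-1} * lies strictly between r⁻ and r⁺, i.e. r⁻ < s < r⁺. -/
import Mathlib


noncomputable section

/-- Entries of an address: a real number or `∞`. -/
abbrev Entry : Type := WithTop ℝ

/-- An address is a sequence of entries. -/
abbrev Addr : Type := ℕ → Entry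

/-- The address `∞` (all of whose entries are infinite). -/
def topAddr : Addr := fun _ => ⊤

/-- The shift map `σ`, deleting the first entry. -/
def shift (a : Addr) : Addr := fun k => a (k + 1)

/-- The iterated shift `σ^k`. -/
def shiftIter (a : Addr) (k : ℕ) : Addr := fun j => a (j + k)

/-- `σ^k(a)` is defined (all earlier iterates differ from `∞`). -/
def shiftDef (a : Addr) (k : ℕ) : Prop := ∀ j, j < k → shiftIter a j ≠ topAddr

/-- Prepending an entry to an address. -/
def consAddr (x : Entry) (a : Addr) : Addr := fun k => if k = 0 then x else a (k - 1)

/-- The lexicographic (strict) order on addresses. -/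
def addrLt (a b : Addr) : Prop := ∃ k, (∀ j, j < k → a j = b j) ∧ a k < b k

/-- The lexicographic order on addresses. -/
def addrLe (a b : Addr) : Prop := addrLt a b ∨ a = b

/-- Infinite external addresses: all entries are integers. -/
def IsExtAddr (a : Addr) : Prop := ∀ k, ∃ m : ℤ, a k = ((m : ℝ) : Entry)

/-- Intermediate external addresses of length `n ≥ 1`: the first `n - 2` entries are
integers, the `(n-1)`-st entry lies in `ℤ + 1/2`, and all further entries are `∞`
(for `n = 1` this is the address `∞` itself). -/
def IsIntermediate (a : Addr) (n : ℕ) : Prop :=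
  1 ≤ n ∧ (∀ k, k + 2 < n → ∃ m : ℤ, a k = ((m : ℝ) : Entry)) ∧
    (∀ k, k + 2 = n → ∃ m : ℤ, a k = (((m : ℝ) + 1 / 2 : ℝ) : Entry)) ∧
    (∀ k, n ≤ k + 1 → a k = ⊤)

/-- Membership in `Ṡ`: infinite external addresses and intermediate ones of length `≥ 2`. -/
def InSDot (a : Addr) : Prop := IsExtAddr a ∨ ∃ n, 2 ≤ n ∧ IsIntermediate a n

/-- Membership in `S̄ = Ṡ ∪ {∞}`. -/
def InSBar (a : Addr) : Prop := InSDot a ∨ a = topAddr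

/-- `a` is periodic of (exact) period `n`. -/
def PeriodicAddr (a : Addr) (n : ℕ) : Prop :=
  1 ≤ n ∧ shiftIter a n = a ∧ ∀ m, 1 ≤ m → m < n → shiftIter a m ≠ a

/-- Itinerary entries: integers `j`, boundary symbols `[j/(j-1)]` (encoded `bdy j`),
or the symbol `*`. -/
inductive ItinEntry : Type
  | int : ℤ → ItinEntry
  | bdy : ℤ → ItinEntry
  | star : ItinEntry
  deriving DecidableEq

open scoped Classical in
/-- The itinerary `itin_s(r)`; position `k` holds the entry `u_{k+1}` of the paper:
`u_{k+1} = j` if `js < σ^k(r) < (j+1)s`, the boundary symbol `[j/(j-1)]` if `σ^k(r) = js`,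
and `*` if `σ^k(r) = ∞`. -/
def itin (s r : Addr) : ℕ → ItinEntry := fun k =>
  if shiftIter r k = topAddr then ItinEntry.star
  else if h : ∃ j : ℤ, shiftIter r k = consAddr ((j : ℝ) : Entry) s then ItinEntry.bdy h.choose
  else if h : ∃ j : ℤ, addrLt (consAddr ((j : ℝ) : Entry) s) (shiftIter r k) ∧
      addrLt (shiftIter r k) (consAddr (((j + 1 : ℤ) : ℝ) : Entry) s) then ItinEntry.int h.choose
  else ItinEntry.star

/-- Replace each boundary symbol `[j/(j-1)]` by `j`. -/
def entryPlus : ItinEntry → ItinEntry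
  | ItinEntry.bdy j => ItinEntry.int j
  | e => e

/-- Replace each boundary symbol `[j/(j-1)]` by `j - 1`. -/
def entryMinus : ItinEntry → ItinEntry
  | ItinEntry.bdy j => ItinEntry.int (j - 1)
  | e => e

/-- The itinerary `itin⁺_s(r)`. -/
def itinPlus (s r : Addr) : ℕ → ItinEntry := fun k => entryPlus (itin s r k)

/-- The itinerary `itin⁻_s(r)`. -/
def itinMinus (s r : Addr) : ℕ → ItinEntry := fun k => entryMinus (itin s r k)

/-- The periodic itinerary `(u_1 … u_n)^∞` (with `u_i` encoded as `u (i - 1)`). -/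
def perItin (u : ℕ → ℤ) (n : ℕ) : ℕ → ItinEntry := fun k => ItinEntry.int (u (k % n))

/-- The finite itinerary word `u_1 … u_{n-1} *` (star from position `n - 1` onwards). -/
def finWord (u : ℕ → ℤ) (n : ℕ) : ℕ → ItinEntry := fun k =>
  if k + 1 < n then ItinEntry.int (u k) else ItinEntry.star

/-- A combinatorial characteristic ray pair of period `n` with itinerary `(u_1 … u_n)^∞`. -/
def CharRayPair (rm rp : Addr) (n : ℕ) (u : ℕ → ℤ) : Prop :=
  IsExtAddr rm ∧ IsExtAddr rp ∧ PeriodicAddr rm n ∧ PeriodicAddr rp n ∧ addrLt rm rp ∧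
    (∀ k, 1 ≤ k → ¬(addrLt rm (shiftIter rm k) ∧ addrLt (shiftIter rm k) rp)) ∧
    (∀ k, 1 ≤ k → ¬(addrLt rm (shiftIter rp k) ∧ addrLt (shiftIter rp k) rp)) ∧
    itinMinus rm rm = perItin u n ∧ itinMinus rm rp = perItin u n ∧
    addrLt (shiftIter rp (n - 1)) (shiftIter rm (n - 1))

/-! ### Auxiliary lemmas -/

lemma consAddr_zero (x : Entry) (a : Addr) : consAddr x a 0 = x := rfl

lemma consAddr_succ (x : Entry) (a : Addr) (j : ℕ) : consAddr x a (j + 1) = a j := by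
  simp [consAddr]

lemma shift_cons (x : Entry) (a : Addr) : shift (consAddr x a) = a := by
  funext j; simp [shift, consAddr]

lemma cons_shift (a : Addr) : consAddr (a 0) (shift a) = a := by
  funext j
  cases j with
  | zero => rfl
  | succ k => simp [consAddr, shift]

lemma shiftIter_zero (a : Addr) : shiftIter a 0 = a := by
  funext j; simp [shiftIter]

lemma shiftIter_apply_zero (a : Addr) (k : ℕ) : shiftIter a k 0 = a k := by
  simp [shiftIter]

lemma shift_shiftIter (a : Addr) (k : ℕ) : shift (shiftIter a k) = shiftIter a (k + 1) := by
  funext j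
  show a (j + 1 + k) = a (j + (k + 1))
  exact congrArg a (by omega)

lemma shiftIter_cons (a : Addr) (k : ℕ) :
    shiftIter a k = consAddr (a k) (shiftIter a (k + 1)) := by
  funext j
  cases j with
  | zero => show a (0 + k) = _ ; rw [Nat.zero_add]; rfl
  | succ i =>
    show a (i + 1 + k) = consAddr (a k) (shiftIter a (k+1)) (i+1)
    rw [consAddr_succ]
    exact congrArg a (by omega)

lemma addrLt_irrefl (a : Addr) : ¬ addrLt a a := by
  rintro ⟨k, -, hk⟩; exact lt_irrefl _ hk

lemma addrLt_trans {a b c : Addr} (h1 : addrLt a b) (h2 : addrLt b c) : addrLt a c := by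
  obtain ⟨k1, p1, l1⟩ := h1
  obtain ⟨k2, p2, l2⟩ := h2
  rcases lt_trichotomy k1 k2 with h | h | h
  · exact ⟨k1, fun j hj => (p1 j hj).trans (p2 j (hj.trans h)), by rw [← p2 k1 h]; exact l1⟩
  · subst h; exact ⟨k1, fun j hj => (p1 j hj).trans (p2 j hj), l1.trans l2⟩
  · exact ⟨k2, fun j hj => (p1 j (hj.trans h)).trans (p2 j hj), by rw [p1 k2 h]; exact l2⟩

lemma addrLt_asymm {a b : Addr} (h1 : addrLt a b) (h2 : addrLt b a) : False :=
  addrLt_irrefl a (addrLt_trans h1 h2)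

lemma addr_trichot {a b : Addr} (h : a ≠ b) : addrLt a b ∨ addrLt b a := by
  classical
  have hex : ∃ k, a k ≠ b k := by
    by_contra hc
    push_neg at hc
    exact h (funext hc)
  have hk : a (Nat.find hex) ≠ b (Nat.find hex) := Nat.find_spec hex
  have hpre : ∀ j, j < Nat.find hex → a j = b j := by
    intro j hj
    have := Nat.find_min hex hj
    tauto
  rcases lt_or_gt_of_ne hk with h' | h'
  · exact Or.inl ⟨_, hpre, h'⟩
  · exact Or.inr ⟨_, fun j hj => (hpre j hj).symm, h'⟩

lemma addr_not_top_lt (a : Addr) : ¬ addrLt topAddr a := by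
  rintro ⟨k, -, hk⟩
  exact (not_top_lt : ¬ (⊤ : Entry) < a k) hk

lemma addr_lt_top {a : Addr} (h : a ≠ topAddr) : addrLt a topAddr := by
  classical
  have hex : ∃ k, a k ≠ ⊤ := by
    by_contra hc
    push_neg at hc
    exact h (funext fun k => hc k)
  refine ⟨Nat.find hex, fun j hj => ?_, (Nat.find_spec hex).lt_top⟩
  have := Nat.find_min hex hj
  push_neg at this
  exact this

lemma addrLe_of_not_lt {a b : Addr} (h : ¬ addrLt a b) : addrLe b a := by
  by_cases he : b = a
  · exact Or.inr he
  · rcases addr_trichot he with h' | h'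
    · exact Or.inl h'
    · exact absurd h' h

lemma not_lt_of_le' {a b : Addr} (h : addrLe a b) : ¬ addrLt b a := by
  rcases h with h | rfl
  · exact fun h' => addrLt_asymm h h'
  · exact addrLt_irrefl a

lemma addr_lt_of_le_of_lt {a b c : Addr} (h1 : addrLe a b) (h2 : addrLt b c) : addrLt a c := by
  rcases h1 with h1 | rfl
  · exact addrLt_trans h1 h2
  · exact h2

lemma lt_of_nlt_lt {rm c a : Addr} (hc : ¬ addrLt rm c) (ha : addrLt rm a) : addrLt c a :=
  addr_lt_of_le_of_lt (addrLe_of_not_lt hc) ha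

lemma consLt_iff {x y : Entry} {p q : Addr} :
    addrLt (consAddr x p) (consAddr y q) ↔ x < y ∨ (x = y ∧ addrLt p q) := by
  constructor
  · rintro ⟨k, pre, hk⟩
    cases k with
    | zero => exact Or.inl hk
    | succ i =>
      have h0 : x = y := pre 0 (Nat.succ_pos i)
      refine Or.inr ⟨h0, ⟨i, fun j hj => ?_, ?_⟩⟩
      · have := pre (j + 1) (by omega)
        rwa [consAddr_succ, consAddr_succ] at this
      · have := hk
        rwa [consAddr_succ, consAddr_succ] at this
  · rintro (h | ⟨rfl, k, pre, hk⟩)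
    · exact ⟨0, fun j hj => absurd hj (Nat.not_lt_zero j), h⟩
    · refine ⟨k + 1, fun j hj => ?_, ?_⟩
      · cases j with
        | zero => rfl
        | succ i => rw [consAddr_succ, consAddr_succ]; exact pre i (by omega)
      · rw [consAddr_succ, consAddr_succ]; exact hk

lemma icoe_lt {p q : ℤ} : (((p : ℝ)) : Entry) < (((q : ℝ)) : Entry) ↔ p < q := by
  rw [WithTop.coe_lt_coe]; exact Int.cast_lt

lemma icoe_inj {p q : ℤ} : (((p : ℝ)) : Entry) = (((q : ℝ)) : Entry) ↔ p = q := by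
  rw [WithTop.coe_eq_coe]; exact Int.cast_inj

lemma hcoe_ne {p m : ℤ} : ((((m : ℝ) + 1 / 2 : ℝ)) : Entry) ≠ (((p : ℝ)) : Entry) := by
  rw [Ne, WithTop.coe_eq_coe]
  intro h
  have h2 : (2 * m + 1 : ℝ) = (2 * p : ℝ) := by linarith
  have h3 : (2 * m + 1 : ℤ) = 2 * p := by exact_mod_cast h2
  omega

lemma icoe_lt_hcoe {p m : ℤ} :
    (((p : ℝ)) : Entry) < ((((m : ℝ) + 1 / 2 : ℝ)) : Entry) ↔ p ≤ m := by
  rw [WithTop.coe_lt_coe]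
  constructor
  · intro h
    have h1 : (p : ℝ) < (m : ℝ) + 1 := by linarith
    have h2 : p < m + 1 := by exact_mod_cast h1
    omega
  · intro h
    have : (p : ℝ) ≤ (m : ℝ) := by exact_mod_cast h
    linarith

lemma hcoe_lt_icoe {m q : ℤ} :
    ((((m : ℝ) + 1 / 2 : ℝ)) : Entry) < (((q : ℝ)) : Entry) ↔ m < q := by
  rw [WithTop.coe_lt_coe]
  constructor
  · intro h
    have h1 : (m : ℝ) < (q : ℝ) := by linarith
    exact_mod_cast h1
  · intro h
    have : (m : ℝ) + 1 ≤ (q : ℝ) := by exact_mod_cast h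
    linarith

/-! ### The rotated order `kLt` and cyclic orders -/

def kLt (rm a b : Addr) : Prop :=
  (addrLt rm a ∧ addrLt rm b ∧ addrLt a b) ∨
  (¬ addrLt rm a ∧ ¬ addrLt rm b ∧ addrLt a b) ∨
  (addrLt rm a ∧ ¬ addrLt rm b)

def cyc (R : Addr → Addr → Prop) (a b c : Addr) : Prop :=
  (R a b ∧ R b c) ∨ (R b c ∧ R c a) ∨ (R c a ∧ R a b)

lemma kTT {rm a b : Addr} (ha : addrLt rm a) (hb : addrLt rm b) :
    kLt rm a b ↔ addrLt a b := by
  unfold kLt; tauto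

lemma kFF {rm a b : Addr} (ha : ¬ addrLt rm a) (hb : ¬ addrLt rm b) :
    kLt rm a b ↔ addrLt a b := by
  unfold kLt; tauto

lemma kTF {rm a b : Addr} (ha : addrLt rm a) (hb : ¬ addrLt rm b) : kLt rm a b :=
  Or.inr (Or.inr ⟨ha, hb⟩)

lemma kFT {rm a b : Addr} (ha : ¬ addrLt rm a) (hb : addrLt rm b) : ¬ kLt rm a b := by
  unfold kLt; tauto

lemma cyc_kLt_iff {rm a b c : Addr} :
    cyc (kLt rm) a b c ↔ cyc addrLt a b c := by
  by_cases ha : addrLt rm a <;> by_cases hb : addrLt rm b <;> by_cases hc : addrLt rm c <;>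
    unfold cyc
  · rw [kTT ha hb, kTT hb hc, kTT hc ha]
  · -- TTF
    have hca : addrLt c a := lt_of_nlt_lt hc ha
    have hcb : addrLt c b := lt_of_nlt_lt hc hb
    have hnbc : ¬ addrLt b c := fun h => addrLt_asymm h hcb
    have i1 := kTT ha hb (rm := rm)
    have t2 := kTF hb hc (rm := rm)
    have f3 := kFT hc ha (rm := rm)
    tauto
  · -- TFT
    have hba : addrLt b a := lt_of_nlt_lt hb ha
    have hbc : addrLt b c := lt_of_nlt_lt hb hc
    have hnab : ¬ addrLt a b := fun h => addrLt_asymm h hba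
    have t1 := kTF ha hb (rm := rm)
    have f2 := kFT hb hc (rm := rm)
    have i3 := kTT hc ha (rm := rm)
    tauto
  · -- TFF
    have hba : addrLt b a := lt_of_nlt_lt hb ha
    have hca : addrLt c a := lt_of_nlt_lt hc ha
    have hnab : ¬ addrLt a b := fun h => addrLt_asymm h hba
    have hnac : ¬ addrLt a c := fun h => addrLt_asymm h hca
    have t1 := kTF ha hb (rm := rm)
    have i2 := kFF hb hc (rm := rm)
    have f3 := kFT hc ha (rm := rm)
    tauto
  · -- FTT
    have hab : addrLt a b := lt_of_nlt_lt ha hb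
    have hac : addrLt a c := lt_of_nlt_lt ha hc
    have hnba : ¬ addrLt b a := fun h => addrLt_asymm h hab
    have hnca : ¬ addrLt c a := fun h => addrLt_asymm h hac
    have f1 := kFT ha hb (rm := rm)
    have i2 := kTT hb hc (rm := rm)
    have t3 := kTF hc ha (rm := rm)
    tauto
  · -- FTF
    have hab : addrLt a b := lt_of_nlt_lt ha hb
    have hcb : addrLt c b := lt_of_nlt_lt hc hb
    have hnbc : ¬ addrLt b c := fun h => addrLt_asymm h hcb
    have hnba : ¬ addrLt b a := fun h => addrLt_asymm h hab
    have f1 := kFT ha hb (rm := rm)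
    have t2 := kTF hb hc (rm := rm)
    have i3 := kFF hc ha (rm := rm)
    tauto
  · -- FFT
    have hac : addrLt a c := lt_of_nlt_lt ha hc
    have hbc : addrLt b c := lt_of_nlt_lt hb hc
    have hnca : ¬ addrLt c a := fun h => addrLt_asymm h hac
    have hncb : ¬ addrLt c b := fun h => addrLt_asymm h hbc
    have i1 := kFF ha hb (rm := rm)
    have f2 := kFT hb hc (rm := rm)
    have t3 := kTF hc ha (rm := rm)
    tauto
  · rw [kFF ha hb, kFF hb hc, kFF hc ha]

/-! ### Extraction from itineraries -/

lemma itin_int {b r : Addr} {k : ℕ} {j : ℤ} (h : itin b r k = ItinEntry.int j) :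
    addrLt (consAddr ((j : ℝ) : Entry) b) (shiftIter r k) ∧
    addrLt (shiftIter r k) (consAddr (((j + 1 : ℤ) : ℝ) : Entry) b) := by
  unfold itin at h
  split_ifs at h with h1 h2 h3 <;>
    first
      | (have hspec := h3.choose_spec
         have he : h3.choose = j := ItinEntry.int.inj h
         rwa [he] at hspec)
      | exact absurd h (by simp)

lemma itinMinus_int {b r : Addr} {k : ℕ} {v : ℤ} (h : itinMinus b r k = ItinEntry.int v) :
    (addrLt (consAddr ((v : ℝ) : Entry) b) (shiftIter r k) ∧
      addrLt (shiftIter r k) (consAddr (((v + 1 : ℤ) : ℝ) : Entry) b)) ∨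
    shiftIter r k = consAddr (((v + 1 : ℤ) : ℝ) : Entry) b := by
  unfold itinMinus itin at h
  split_ifs at h with h1 h2 h3 <;>
    first
      | (have hspec := h2.choose_spec
         have he : h2.choose = v + 1 := by
           simp only [entryMinus, ItinEntry.int.injEq] at h
           omega
         rw [he] at hspec
         exact Or.inr hspec)
      | (have hspec := h3.choose_spec
         have he : h3.choose = v := by
           simp only [entryMinus, ItinEntry.int.injEq] at h
           exact h
         rw [he] at hspec
         exact Or.inl hspec)
      | exact absurd h (by simp [entryMinus])

/-! ### Intermediate addresses -/

lemma inter_shift_top {s : Addr} {n : ℕ} (hs : IsIntermediate s n) {k : ℕ}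
    (hk : n - 1 ≤ k) : shiftIter s k = topAddr := by
  have h1 := hs.1
  funext j
  have := hs.2.2.2 (j + k) (by omega)
  exact this

lemma inter_decomp {s : Addr} {n : ℕ} (hs : IsIntermediate s n) (hn : 2 ≤ n) :
    ∃ m : ℤ, s (n - 2) = (((m : ℝ) + 1 / 2 : ℝ) : Entry) ∧
      shiftIter s (n - 2) = consAddr ((((m : ℝ) + 1 / 2 : ℝ)) : Entry) topAddr := by
  obtain ⟨m, hm⟩ := hs.2.2.1 (n - 2) (by omega)
  refine ⟨m, hm, funext fun j => ?_⟩
  cases j with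
  | zero =>
    show s (0 + (n - 2)) = _
    rw [Nat.zero_add, hm]; rfl
  | succ i =>
    show s (i + 1 + (n - 2)) = consAddr _ topAddr (i + 1)
    rw [consAddr_succ]
    exact hs.2.2.2 (i + 1 + (n - 2)) (by omega)

/-! ### Sector membership and sides -/

lemma side_of_mem {rm x : Addr} {u m : ℤ}
    (hx1 : addrLt (consAddr ((u : ℝ) : Entry) rm) x)
    (hx2 : addrLe x (consAddr (((u + 1 : ℤ) : ℝ) : Entry) rm))
    (h0 : x 0 = ((m : ℝ) : Entry)) :
    (m = u ∧ addrLt rm (shift x)) ∨ (m = u + 1 ∧ addrLe (shift x) rm) := by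
  rcases hx2 with hx2 | hx2
  · rw [← cons_shift x, h0] at hx1 hx2
    rcases consLt_iff.mp hx1 with h | ⟨he, hlt⟩
    · rcases consLt_iff.mp hx2 with h' | ⟨he', hlt'⟩
      · exfalso
        have := icoe_lt.mp h
        have := icoe_lt.mp h'
        omega
      · exact Or.inr ⟨icoe_inj.mp he', Or.inl hlt'⟩
    · exact Or.inl ⟨(icoe_inj.mp he).symm, hlt⟩
  · right
    have h00 : ((m : ℝ) : Entry) = (((u + 1 : ℤ) : ℝ) : Entry) := by
      rw [← h0, hx2]; rfl
    refine ⟨icoe_inj.mp h00, ?_⟩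
    rw [hx2, shift_cons]
    exact Or.inr rfl

lemma half_pin {rm x : Addr} {u m : ℤ}
    (hx1 : addrLt (consAddr ((u : ℝ) : Entry) rm) x)
    (hx2 : addrLe x (consAddr (((u + 1 : ℤ) : ℝ) : Entry) rm))
    (h0 : x 0 = (((m : ℝ) + 1 / 2 : ℝ) : Entry)) : m = u := by
  rcases hx2 with hx2 | hx2
  · rw [← cons_shift x, h0] at hx1 hx2
    rcases consLt_iff.mp hx1 with h | ⟨he, -⟩
    · rcases consLt_iff.mp hx2 with h' | ⟨he', -⟩
      · have h1 := icoe_lt_hcoe.mp h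
        have h2 := hcoe_lt_icoe.mp h'
        omega
      · exact absurd he' hcoe_ne
    · exact absurd he.symm hcoe_ne
  · exfalso
    rw [hx2] at h0
    exact hcoe_ne h0.symm

/-! ### The twist lemma: order in a sector vs rotated order of shifts -/

lemma TW (rm x y : Addr) (u : ℤ) (hrm : addrLt rm topAddr)
    (hx1 : addrLt (consAddr ((u : ℝ) : Entry) rm) x)
    (hx2 : addrLe x (consAddr (((u + 1 : ℤ) : ℝ) : Entry) rm))
    (hy1 : addrLt (consAddr ((u : ℝ) : Entry) rm) y)
    (hy2 : addrLe y (consAddr (((u + 1 : ℤ) : ℝ) : Entry) rm))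
    (hxd : (∃ m : ℤ, x 0 = ((m : ℝ) : Entry)) ∨
      (shift x = topAddr ∧ ∃ m : ℤ, x 0 = (((m : ℝ) + 1 / 2 : ℝ) : Entry)))
    (hyd : (∃ m : ℤ, y 0 = ((m : ℝ) : Entry)) ∨
      (shift y = topAddr ∧ ∃ m : ℤ, y 0 = (((m : ℝ) + 1 / 2 : ℝ) : Entry)))
    (hnn : ¬ (shift x = topAddr ∧ shift y = topAddr)) :
    addrLt x y ↔ kLt rm (shift x) (shift y) := by
  have key : addrLt x y ↔ (x 0 < y 0 ∨ (x 0 = y 0 ∧ addrLt (shift x) (shift y))) := by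
    conv_lhs => rw [← cons_shift x, ← cons_shift y]
    exact consLt_iff
  rcases hxd with ⟨m, hm⟩ | ⟨hxt, m, hm⟩
  · rcases hyd with ⟨m', hm'⟩ | ⟨hyt, m', hm'⟩
    · -- both integer first entries
      rw [key, hm, hm']
      rcases side_of_mem hx1 hx2 hm with ⟨rfl, hsx⟩ | ⟨hme, hsx⟩
      · rcases side_of_mem hy1 hy2 hm' with ⟨rfl, hsy⟩ | ⟨hme', hsy⟩
        · rw [kTT hsx hsy]
          constructor
          · rintro (h | ⟨-, h⟩)
            · exact absurd (icoe_lt.mp h) (by omega)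
            · exact h
          · intro h; exact Or.inr ⟨rfl, h⟩
        · subst hme'
          refine iff_of_true (Or.inl (icoe_lt.mpr (by omega))) ?_
          exact kTF hsx (not_lt_of_le' hsy)
      · subst hme
        rcases side_of_mem hy1 hy2 hm' with ⟨rfl, hsy⟩ | ⟨hme', hsy⟩
        · refine iff_of_false ?_ (kFT (not_lt_of_le' hsx) hsy)
          rintro (h | ⟨he, -⟩)
          · exact absurd (icoe_lt.mp h) (by omega)
          · exact absurd (icoe_inj.mp he) (by omega)
        · subst hme'
          rw [kFF (not_lt_of_le' hsx) (not_lt_of_le' hsy)]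
          constructor
          · rintro (h | ⟨-, h⟩)
            · exact absurd (icoe_lt.mp h) (by omega)
            · exact h
          · intro h; exact Or.inr ⟨rfl, h⟩
    · -- x integer, y half
      have hm'u : m' = u := half_pin hy1 hy2 hm'
      subst hm'u
      rw [key, hm, hm', hyt]
      rcases side_of_mem hx1 hx2 hm with ⟨rfl, hsx⟩ | ⟨hme, hsx⟩
      · refine iff_of_true (Or.inl (icoe_lt_hcoe.mpr le_rfl)) ?_
        have hxnt : shift x ≠ topAddr := fun he => hnn ⟨he, hyt⟩
        exact Or.inl ⟨hsx, hrm, addr_lt_top hxnt⟩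
      · subst hme
        refine iff_of_false ?_ ?_
        · rintro (h | ⟨he, -⟩)
          · exact absurd (icoe_lt_hcoe.mp h) (by omega)
          · exact absurd he.symm hcoe_ne
        · rintro (⟨h, -, -⟩ | ⟨-, h, -⟩ | ⟨h, -⟩)
          · exact not_lt_of_le' hsx h
          · exact h hrm
          · exact not_lt_of_le' hsx h
  · -- x half
    rcases hyd with ⟨m', hm'⟩ | ⟨hyt, m', hm'⟩
    · -- y integer
      have hmu : m = u := half_pin hx1 hx2 hm
      subst hmu
      rw [key, hm, hm', hxt]
      rcases side_of_mem hy1 hy2 hm' with ⟨rfl, hsy⟩ | ⟨hme', hsy⟩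
      · refine iff_of_false ?_ ?_
        · rintro (h | ⟨he, -⟩)
          · exact absurd (hcoe_lt_icoe.mp h) (by omega)
          · exact absurd he hcoe_ne
        · rintro (⟨-, -, h⟩ | ⟨h, -, -⟩ | ⟨-, h⟩)
          · exact addr_not_top_lt _ h
          · exact h hrm
          · exact h hsy
      · subst hme'
        refine iff_of_true (Or.inl (hcoe_lt_icoe.mpr (by omega))) ?_
        exact Or.inr (Or.inr ⟨hrm, not_lt_of_le' hsy⟩)
    · exact absurd ⟨hxt, hyt⟩ hnn

lemma ext_ne_top {a : Addr} (h : IsExtAddr a) : a ≠ topAddr := by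
  intro he
  obtain ⟨m, hm⟩ := h 0
  rw [he] at hm
  simpa [topAddr] using hm

/-- For a combinatorial characteristic ray pair `⟨r⁻, r⁺⟩` of period
`n ≥ 2` with itinerary `(u_1 … u_n)^∞`: there is at most one intermediate external
address `s` of length `n` with `itin_{r⁻}(s) = u_1 … u_{n-1} *`, and every intermediate
external address `s` of length `n` with `itin_{r⁻}(s) = itin_{r⁺}(s) = K(s) = u_1 … u_{n-1} *`
satisfies `r⁻ < s < r⁺`. -/
theorem stmt2 (n : ℕ) (hn : 2 ≤ n) (u : ℕ → ℤ) (rm rp : Addr)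
    (hchar : CharRayPair rm rp n u) :
    (∀ s s' : Addr, IsIntermediate s n → IsIntermediate s' n →
      itin rm s = finWord u n → itin rm s' = finWord u n → s = s') ∧
    (∀ s : Addr, IsIntermediate s n →
      itin rm s = finWord u n → itin rp s = finWord u n → itin s s = finWord u n →
      addrLt rm s ∧ addrLt s rp) := by

  obtain ⟨hextm, hextp, hperm, hperp, hmp, hOm, hOp, hKm, hKp, hlast⟩ := hchar
  have hrmtop : addrLt rm topAddr := addr_lt_top (ext_ne_top hextm)
  have hCmem : ∀ s : Addr, itin rm s = finWord u n → ∀ k, k + 1 < n →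
      addrLt (consAddr ((u k : ℝ) : Entry) rm) (shiftIter s k) ∧
      addrLt (shiftIter s k) (consAddr (((u k + 1 : ℤ) : ℝ) : Entry) rm) := by
    intro s hit k hk
    have h1 : itin rm s k = ItinEntry.int (u k) := by
      rw [hit]; simp [finWord, hk]
    exact itin_int h1
  constructor
  · -- uniqueness
    intro s s' hs hs' hit hit'
    have base : shiftIter s (n - 2) = shiftIter s' (n - 2) := by
      obtain ⟨m, hm0, hdec⟩ := inter_decomp hs hn
      obtain ⟨m', hm0', hdec'⟩ := inter_decomp hs' hn
      have hk : (n - 2) + 1 < n := by omega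
      obtain ⟨h1, h2⟩ := hCmem s hit (n - 2) hk
      obtain ⟨h1', h2'⟩ := hCmem s' hit' (n - 2) hk
      have e : m = u (n - 2) := half_pin h1 (Or.inl h2)
        (by rw [shiftIter_apply_zero]; exact hm0)
      have e' : m' = u (n - 2) := half_pin h1' (Or.inl h2')
        (by rw [shiftIter_apply_zero]; exact hm0')
      rw [hdec, hdec', e, e']
    have step : ∀ k, k + 2 < n → shiftIter s (k + 1) = shiftIter s' (k + 1) →
        shiftIter s k = shiftIter s' k := by
      intro k hk2 hT
      obtain ⟨m, hm⟩ := hs.2.1 k hk2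
      obtain ⟨m', hm'⟩ := hs'.2.1 k hk2
      obtain ⟨h1, h2⟩ := hCmem s hit k (by omega)
      obtain ⟨h1', h2'⟩ := hCmem s' hit' k (by omega)
      have S1 := side_of_mem h1 (Or.inl h2) (by rw [shiftIter_apply_zero]; exact hm)
      have S2 := side_of_mem h1' (Or.inl h2') (by rw [shiftIter_apply_zero]; exact hm')
      rw [shift_shiftIter, hT] at S1
      rw [shift_shiftIter] at S2
      have hmm : m = m' := by
        rcases S1 with ⟨e, hside⟩ | ⟨e, hside⟩ <;>
          rcases S2 with ⟨e', hside'⟩ | ⟨e', hside'⟩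
        · omega
        · exact absurd hside (not_lt_of_le' hside')
        · exact absurd hside' (not_lt_of_le' hside)
        · omega
      rw [shiftIter_cons s k, shiftIter_cons s' k, hm, hm', hmm, hT]
    have main : ∀ d, d ≤ n - 2 → shiftIter s (n - 2 - d) = shiftIter s' (n - 2 - d) := by
      intro d
      induction d with
      | zero => intro _; simpa using base
      | succ d ih =>
        intro hd
        have h1 : n - 2 - (d + 1) + 1 = n - 2 - d := by omega
        have h2 : n - 2 - (d + 1) + 2 < n := by omega
        apply step _ h2
        rw [h1]
        exact ih (by omega)
    have hfin := main (n - 2) le_rfl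
    rwa [show n - 2 - (n - 2) = 0 from by omega, shiftIter_zero, shiftIter_zero] at hfin
  · -- betweenness
    intro s hs hitm' hitp' hits'
    have hAmem : ∀ k, k + 1 < n →
        addrLt (consAddr ((u k : ℝ) : Entry) rm) (shiftIter rm k) ∧
        addrLt (shiftIter rm k) (consAddr (((u k + 1 : ℤ) : ℝ) : Entry) rm) := by
      intro k hk
      have h1 : itinMinus rm rm k = ItinEntry.int (u k) := by
        rw [hKm]; simp [perItin, Nat.mod_eq_of_lt (show k < n by omega)]
      rcases itinMinus_int h1 with h | h
      · exact h
      · exfalso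
        have he : shiftIter rm (k + 1) = rm := by
          rw [← shift_shiftIter, h, shift_cons]
        exact hperm.2.2 (k + 1) (by omega) (by omega) he
    have hBmem : ∀ k, k + 1 < n →
        addrLt (consAddr ((u k : ℝ) : Entry) rm) (shiftIter rp k) ∧
        addrLe (shiftIter rp k) (consAddr (((u k + 1 : ℤ) : ℝ) : Entry) rm) := by
      intro k hk
      have h1 : itinMinus rm rp k = ItinEntry.int (u k) := by
        rw [hKp]; simp [perItin, Nat.mod_eq_of_lt (show k < n by omega)]
      rcases itinMinus_int h1 with h | h
      · exact ⟨h.1, Or.inl h.2⟩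
      · refine ⟨?_, Or.inr h⟩
        rw [h]
        exact consLt_iff.mpr (Or.inl (icoe_lt.mpr (by omega)))
    have hCn1 : shiftIter s (n - 1) = topAddr := inter_shift_top hs le_rfl
    have nsA : ∀ k, shiftIter rm k ≠ topAddr := fun k => ext_ne_top (fun j => hextm (j + k))
    have nsB : ∀ k, shiftIter rp k ≠ topAddr := fun k => ext_ne_top (fun j => hextp (j + k))
    have transfer : ∀ k, k + 1 < n →
        (cyc addrLt (shiftIter rm k) (shiftIter s k) (shiftIter rp k) ↔
          cyc (kLt rm) (shiftIter rm (k + 1)) (shiftIter s (k + 1)) (shiftIter rp (k + 1))) := by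
      intro k hk
      obtain ⟨hA1, hA2⟩ := hAmem k hk
      obtain ⟨hC1, hC2⟩ := hCmem s hitm' k hk
      obtain ⟨hB1, hB2⟩ := hBmem k hk
      have dA : (∃ m : ℤ, shiftIter rm k 0 = ((m : ℝ) : Entry)) ∨
          (shift (shiftIter rm k) = topAddr ∧
            ∃ m : ℤ, shiftIter rm k 0 = (((m : ℝ) + 1 / 2 : ℝ) : Entry)) :=
        Or.inl (by rw [shiftIter_apply_zero]; exact hextm k)
      have dB : (∃ m : ℤ, shiftIter rp k 0 = ((m : ℝ) : Entry)) ∨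
          (shift (shiftIter rp k) = topAddr ∧
            ∃ m : ℤ, shiftIter rp k 0 = (((m : ℝ) + 1 / 2 : ℝ) : Entry)) :=
        Or.inl (by rw [shiftIter_apply_zero]; exact hextp k)
      have dC : (∃ m : ℤ, shiftIter s k 0 = ((m : ℝ) : Entry)) ∨
          (shift (shiftIter s k) = topAddr ∧
            ∃ m : ℤ, shiftIter s k 0 = (((m : ℝ) + 1 / 2 : ℝ) : Entry)) := by
        by_cases h2 : k + 2 < n
        · exact Or.inl (by rw [shiftIter_apply_zero]; exact hs.2.1 k h2)
        · refine Or.inr ⟨?_, ?_⟩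
          · rw [shift_shiftIter]; exact inter_shift_top hs (by omega)
          · rw [shiftIter_apply_zero]; exact hs.2.2.1 k (by omega)
      have nA : shift (shiftIter rm k) ≠ topAddr := by
        rw [shift_shiftIter]; exact nsA (k + 1)
      have nB : shift (shiftIter rp k) ≠ topAddr := by
        rw [shift_shiftIter]; exact nsB (k + 1)
      have e1 := TW rm (shiftIter rm k) (shiftIter s k) (u k) hrmtop hA1 (Or.inl hA2)
        hC1 (Or.inl hC2) dA dC (fun h => nA h.1)
      have e2 := TW rm (shiftIter s k) (shiftIter rp k) (u k) hrmtop hC1 (Or.inl hC2)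
        hB1 hB2 dC dB (fun h => nB h.2)
      have e3 := TW rm (shiftIter rp k) (shiftIter rm k) (u k) hrmtop hB1 hB2
        hA1 (Or.inl hA2) dB dA (fun h => nA h.2)
      rw [shift_shiftIter, shift_shiftIter] at e1 e2 e3
      unfold cyc
      rw [e1, e2, e3]
    have base' : cyc (kLt rm) (shiftIter rm (n - 1)) (shiftIter s (n - 1))
        (shiftIter rp (n - 1)) := by
      rw [hCn1]
      have hAne : shiftIter rm (n - 1) ≠ rm := hperm.2.2 (n - 1) (by omega) (by omega)
      have hAtop : addrLt (shiftIter rm (n - 1)) topAddr := addr_lt_top (nsA (n - 1))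
      rcases addr_trichot hAne with hA | hA
      · have hnB : ¬ addrLt rm (shiftIter rp (n - 1)) :=
          fun h => addrLt_asymm h (addrLt_trans hlast hA)
        have hnA : ¬ addrLt rm (shiftIter rm (n - 1)) := fun h => addrLt_asymm h hA
        exact Or.inr (Or.inl ⟨Or.inr (Or.inr ⟨hrmtop, hnB⟩), Or.inr (Or.inl ⟨hnB, hnA, hlast⟩)⟩)
      · by_cases hB : addrLt rm (shiftIter rp (n - 1))
        · exact Or.inr (Or.inr ⟨Or.inl ⟨hB, hA, hlast⟩, Or.inl ⟨hA, hrmtop, hAtop⟩⟩)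
        · exact Or.inl ⟨Or.inl ⟨hA, hrmtop, hAtop⟩, Or.inr (Or.inr ⟨hrmtop, hB⟩)⟩
    have inv : ∀ d, d ≤ n - 2 → cyc addrLt (shiftIter rm (n - 2 - d))
        (shiftIter s (n - 2 - d)) (shiftIter rp (n - 2 - d)) := by
      intro d
      induction d with
      | zero =>
        intro _
        have ht := transfer (n - 2) (by omega)
        rw [show n - 2 + 1 = n - 1 from by omega] at ht
        simpa using ht.mpr base'
      | succ d ih =>
        intro hd
        have hk1 : n - 2 - (d + 1) + 1 = n - 2 - d := by omega
        have ht := transfer (n - 2 - (d + 1)) (by omega)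
        rw [hk1] at ht
        exact ht.mpr (cyc_kLt_iff.mpr (ih (by omega)))
    have h0 := inv (n - 2) le_rfl
    rw [show n - 2 - (n - 2) = 0 from by omega, shiftIter_zero, shiftIter_zero,
      shiftIter_zero] at h0
    rcases h0 with ⟨ha, hb⟩ | ⟨ha, hb⟩ | ⟨ha, hb⟩
    · exact ⟨ha, hb⟩
    · exact absurd hb (fun h => addrLt_asymm hmp h)
    · exact absurd ha (fun h => addrLt_asymm hmp h)

end
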